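/- arXiv:2605.31169 — 7 statements merged into one kernel-verified Lean document; each statement's English description precedes it below -/
import Mathlib

section
/- Let p ∈ ℝ[x_1,…,x_n] be invariant under the symmetric group S_n. Then p belongs to the degree-2d truncated quadratic module M_{n,2d}(g) if and only if there exist sums of squares σ̃, ρ̃ ∈ ℝ[x_1,…,x_n] with deg σ̃ ≤ 2d and deg ρ̃ ≤ 2d-2 such that σ̃ is S_n-invariant, ρ̃ is invariant under Stab_{S_n}(n), and p = σ̃ + Σ_{i=1}^n ((i n)·ρ̃)·(x_i - x_i²), where (n n) denotes the identity permutation. -/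
open MvPolynomial

/-- A polynomial is a sum of squares. -/
def IsSOS {n : ℕ} (p : MvPolynomial (Fin n) ℝ) : Prop :=
  ∃ (k : ℕ) (q : Fin k → MvPolynomial (Fin n) ℝ), p = ∑ j, (q j) ^ 2

/-- Membership in the degree-`2d` truncated quadratic module `M_{n,2d}(g)` of the
hypercube, where `g_i = x_i - x_i^2`. -/
def InQuadModule (n d : ℕ) (p : MvPolynomial (Fin n) ℝ) : Prop :=
  ∃ (σ₀ : MvPolynomial (Fin n) ℝ) (σ : Fin n → MvPolynomial (Fin n) ℝ),
    IsSOS σ₀ ∧ (∀ i, IsSOS (σ i)) ∧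
    σ₀.totalDegree ≤ 2 * d ∧ (∀ i, (σ i).totalDegree ≤ 2 * d - 2) ∧
    p = σ₀ + ∑ i, σ i * (X i - (X i) ^ 2)


lemma isSOS_zero {n : ℕ} : IsSOS (0 : MvPolynomial (Fin n) ℝ) :=
  ⟨0, fun _ => 0, by simp⟩

lemma isSOS_add {n : ℕ} {p q : MvPolynomial (Fin n) ℝ} (hp : IsSOS p) (hq : IsSOS q) :
    IsSOS (p + q) := by
  obtain ⟨k, f, rfl⟩ := hp
  obtain ⟨m, g, rfl⟩ := hq
  refine ⟨k + m, Fin.append f g, ?_⟩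
  rw [Fin.sum_univ_add]
  simp [Fin.append_left, Fin.append_right]

lemma isSOS_sum {n : ℕ} {ι : Type*} (s : Finset ι) (f : ι → MvPolynomial (Fin n) ℝ)
    (h : ∀ i ∈ s, IsSOS (f i)) : IsSOS (∑ i ∈ s, f i) :=
  Finset.sum_induction f IsSOS (fun _ _ => isSOS_add) isSOS_zero h

lemma isSOS_rename {n : ℕ} (e : Fin n → Fin n) {p : MvPolynomial (Fin n) ℝ}
    (hp : IsSOS p) : IsSOS (rename e p) := by
  obtain ⟨k, f, rfl⟩ := hp
  exact ⟨k, fun j => rename e (f j), by simp [map_sum]⟩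

lemma isSOS_C_mul {n : ℕ} {c : ℝ} (hc : 0 ≤ c) {p : MvPolynomial (Fin n) ℝ}
    (hp : IsSOS p) : IsSOS (C c * p) := by
  obtain ⟨k, f, rfl⟩ := hp
  refine ⟨k, fun j => C (Real.sqrt c) * f j, ?_⟩
  rw [Finset.mul_sum]
  refine Finset.sum_congr rfl fun j _ => ?_
  rw [mul_pow, ← C_pow, Real.sq_sqrt hc]

lemma totalDegree_C_mul_le {n : ℕ} (c : ℝ) (p : MvPolynomial (Fin n) ℝ) :
    (C c * p).totalDegree ≤ p.totalDegree :=
  le_trans (totalDegree_mul _ _) (by simp)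


/-- Symmetry reduction on the hypercube: a symmetric polynomial lies in the truncated
quadratic module iff it has a certificate built from one `S_n`-invariant SOS and
translates of one `Stab(n)`-invariant SOS.  Here the variables are indexed by
`Fin (n+1)` and the distinguished index `n` is `Fin.last n`. -/
theorem symmetric_certificate_iff (n d : ℕ) (p : MvPolynomial (Fin (n + 1)) ℝ)
    (hp : ∀ π : Equiv.Perm (Fin (n + 1)), rename π p = p) :
    InQuadModule (n + 1) d p ↔
      ∃ (σ ρ : MvPolynomial (Fin (n + 1)) ℝ),
        IsSOS σ ∧ IsSOS ρ ∧
        σ.totalDegree ≤ 2 * d ∧ ρ.totalDegree ≤ 2 * d - 2 ∧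
        (∀ π : Equiv.Perm (Fin (n + 1)), rename π σ = σ) ∧
        (∀ π : Equiv.Perm (Fin (n + 1)), π (Fin.last n) = Fin.last n → rename π ρ = ρ) ∧
        p = σ + ∑ i, (rename (Equiv.swap i (Fin.last n)) ρ) * (X i - (X i) ^ 2) := by
  constructor
  · rintro ⟨σ₀, σs, hσ₀SOS, hσSOS, hdeg₀, hdegσ, hpeq⟩
    set N : ℝ := (Fintype.card (Equiv.Perm (Fin (n + 1))) : ℝ) with hNdef
    have hNpos : (0 : ℝ) < N := by
      rw [hNdef]; exact_mod_cast Fintype.card_pos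
    have hNinv : (0 : ℝ) ≤ N⁻¹ := le_of_lt (inv_pos.mpr hNpos)
    set σt : MvPolynomial (Fin (n + 1)) ℝ :=
      C N⁻¹ * ∑ π : Equiv.Perm (Fin (n + 1)), rename π σ₀ with hσt
    set τ : Fin (n + 1) → MvPolynomial (Fin (n + 1)) ℝ :=
      fun j => C N⁻¹ * ∑ π : Equiv.Perm (Fin (n + 1)), rename π (σs (π⁻¹ j)) with hτ
    -- translation property
    have hB : ∀ j, rename (Equiv.swap j (Fin.last n)) (τ (Fin.last n)) = τ j := by
      intro j
      rw [hτ]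
      simp only [map_mul, rename_C, map_sum]
      congr 1
      refine Fintype.sum_equiv (Equiv.mulLeft (Equiv.swap j (Fin.last n)))
          _ _ (fun π => ?_)
      have h1 : ((Equiv.swap j (Fin.last n) * π)⁻¹) j = π⁻¹ (Fin.last n) := by
        simp [mul_inv_rev, Equiv.Perm.mul_apply]
      rw [rename_rename, ← Equiv.Perm.coe_mul, Equiv.coe_mulLeft, h1]
    -- averaged identity
    have key : ∀ π : Equiv.Perm (Fin (n + 1)),
        p = rename π σ₀ + ∑ j, rename π (σs (π⁻¹ j)) * (X j - (X j) ^ 2) := by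
      intro π
      conv_lhs => rw [← hp π, hpeq]
      rw [map_add, map_sum]
      congr 1
      rw [← Equiv.sum_comp π (fun j => rename π (σs (π⁻¹ j)) * (X j - (X j) ^ 2))]
      refine Finset.sum_congr rfl fun i _ => ?_
      simp [map_mul, map_sub, map_pow, rename_X]
    have hsum : (Fintype.card (Equiv.Perm (Fin (n + 1)))) • p
        = (∑ π : Equiv.Perm (Fin (n + 1)), rename π σ₀)
          + ∑ j, (∑ π : Equiv.Perm (Fin (n + 1)), rename π (σs (π⁻¹ j)))
              * (X j - (X j) ^ 2) := by
      calc (Fintype.card (Equiv.Perm (Fin (n + 1)))) • p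
          = ∑ _π : Equiv.Perm (Fin (n + 1)), p := by
            rw [Finset.sum_const, Finset.card_univ]
        _ = ∑ π : Equiv.Perm (Fin (n + 1)),
              (rename π σ₀ + ∑ j, rename π (σs (π⁻¹ j)) * (X j - (X j) ^ 2)) :=
            Finset.sum_congr rfl fun π _ => key π
        _ = _ := by
            rw [Finset.sum_add_distrib]
            congr 1
            rw [Finset.sum_comm]
            exact Finset.sum_congr rfl fun j _ => (Finset.sum_mul _ _ _).symm
    have final : p = σt + ∑ j, τ j * (X j - (X j) ^ 2) := by
      have hcast : (Fintype.card (Equiv.Perm (Fin (n + 1)))) • p = C N * p := by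
        rw [hNdef, ← smul_eq_C_mul, Nat.cast_smul_eq_nsmul]
      have h2 := congrArg (fun q => C N⁻¹ * q) hsum
      simp only [hcast] at h2
      rw [← mul_assoc, ← C_mul, inv_mul_cancel₀ (ne_of_gt hNpos), C_1, one_mul] at h2
      have hS : C N⁻¹ * (∑ j, (∑ π : Equiv.Perm (Fin (n + 1)),
            rename (⇑π) (σs (π⁻¹ j))) * (X j - (X j) ^ 2))
          = ∑ j, τ j * (X j - (X j) ^ 2) := by
        rw [Finset.mul_sum]
        refine Finset.sum_congr rfl fun j _ => ?_
        rw [hτ]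
        exact (mul_assoc _ _ _).symm
      rw [h2, mul_add, hS, hσt]
    refine ⟨σt, τ (Fin.last n), ?_, ?_, ?_, ?_, ?_, ?_, ?_⟩
    · exact isSOS_C_mul hNinv (isSOS_sum _ _ fun π _ => isSOS_rename _ hσ₀SOS)
    · exact isSOS_C_mul hNinv (isSOS_sum _ _ fun π _ => isSOS_rename _ (hσSOS _))
    · exact le_trans (totalDegree_C_mul_le _ _)
        (totalDegree_finsetSum_le fun π _ => le_trans (totalDegree_rename_le _ _) hdeg₀)
    · exact le_trans (totalDegree_C_mul_le _ _)
        (totalDegree_finsetSum_le fun π _ => le_trans (totalDegree_rename_le _ _) (hdegσ _))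
    · intro π
      rw [hσt]
      simp only [map_mul, rename_C, map_sum]
      congr 1
      refine Fintype.sum_equiv (Equiv.mulLeft π) _ _ (fun ρ => ?_)
      rw [rename_rename, ← Equiv.Perm.coe_mul, Equiv.coe_mulLeft]
    · intro π hπ
      rw [hτ]
      simp only [map_mul, rename_C, map_sum]
      congr 1
      refine Fintype.sum_equiv (Equiv.mulLeft π) _ _ (fun ρ => ?_)
      have h1 : ((π * ρ)⁻¹) (Fin.last n) = ρ⁻¹ (Fin.last n) := by
        have : π⁻¹ (Fin.last n) = Fin.last n :=
          Equiv.Perm.inv_eq_iff_eq.mpr hπ.symm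
        simp [mul_inv_rev, Equiv.Perm.mul_apply, this]
      rw [rename_rename, ← Equiv.Perm.coe_mul, Equiv.coe_mulLeft, h1]
    · rw [final]
      congr 1
      exact Finset.sum_congr rfl fun j _ => by rw [hB j]
  · rintro ⟨σ, ρ, h1, h2, h3, h4, _, _, hpeq⟩
    exact ⟨σ, fun i => rename (Equiv.swap i (Fin.last n)) ρ, h1,
      fun i => isSOS_rename _ h2, h3,
      fun i => le_trans (totalDegree_rename_le _ _) h4, hpeq⟩
end

section
/- Let p ∈ ℝ[x_1,…,x_n] be invariant under the symmetric group S_n. Then p belongs to the degree-2d truncated quadratic module M_{n,2d}(g) if and only if there exist a positive semidefinite real symmetric matrix Q indexed by the monomials of degree at most d that is S_n-invariant (Q_{πu,πv} = Q_{u,v} for all π ∈ S_n and monomials u, v) and a positive semidefinite real symmetric matrix R indexed by the monomials of degree at most d-1 that is Stab_{S_n}(n)-invariant, such that p = [x]_d^T Q [x]_d + Σ_{i=1}^n ((i n)·([x]_{d-1}^T R [x]_{d-1}))·(x_i - x_i²), where [x]_d denotes the column vector of all monomials in x_1,…,x_n of total degree at most d. -/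
/-!
Membership in the quadratic module is witnessed by a certificate `σ₀ + ∑ σᵢ (xᵢ - xᵢ²)`.
Since `p` is symmetric and permutations permute the constraints `xᵢ - xᵢ²`, the average of
the permuted certificates is again a certificate of `p`; in it the multiplier of `xᵢ - xᵢ²`
is the `(i n)`-translate of the multiplier of `xₙ - xₙ²`, and that one is invariant under the
stabiliser of `n`. On Gram matrices the same averaging keeps positive semidefiniteness, and
Gram matrices indexed by monomials of degree at most `d` exist because the summands of a real
sum of squares of degree `≤ 2d` have degree `≤ d`.
-/

open MvPolynomial

/-- Index set for the monomials of total degree at most `d` in `N` variables: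
exponent vectors with entries (bounded by `d`) summing to at most `d`. -/
def MonIdx (N d : ℕ) : Type := {m : Fin N → Fin (d + 1) // ∑ i, (m i : ℕ) ≤ d}

instance (N d : ℕ) : Fintype (MonIdx N d) := by
  unfold MonIdx; infer_instance

instance (N d : ℕ) : DecidableEq (MonIdx N d) := by
  unfold MonIdx; infer_instance

/-- The monomial associated to an index. -/
noncomputable def monOf {N d : ℕ} (m : MonIdx N d) : MvPolynomial (Fin N) ℝ :=
  ∏ i, (X i) ^ (m.1 i : ℕ)

/-- Action of a permutation `π` on a monomial index, so that
`rename π (monOf m) = monOf (permIdx π m)`. -/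
def permIdx {N d : ℕ} (π : Equiv.Perm (Fin N)) (m : MonIdx N d) : MonIdx N d :=
  ⟨fun j => m.1 (π⁻¹ j), by
    simpa using (Equiv.sum_comp π⁻¹ (fun i => ((m.1 i : ℕ)))).le.trans m.2⟩

namespace MvPolynomial

variable {σ R : Type*}

lemma homogeneousComponent_add_mul_of_totalDegree_le [CommSemiring R] {f g : MvPolynomial σ R}
    {m n : ℕ} (hf : f.totalDegree ≤ m) (hg : g.totalDegree ≤ n) :
    homogeneousComponent (m + n) (f * g) =
      homogeneousComponent m f * homogeneousComponent n g := by
  classical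
  ext e
  by_cases he : e.degree = m + n
  · rw [coeff_homogeneousComponent, if_pos he, coeff_mul, coeff_mul]
    refine Finset.sum_congr rfl fun ⟨a, b⟩ hab => ?_
    rw [Finset.HasAntidiagonal.mem_antidiagonal] at hab
    dsimp only
    have hdeg : a.degree + b.degree = m + n := by rw [← map_add, hab, he]
    rw [coeff_homogeneousComponent, coeff_homogeneousComponent]
    by_cases ha : a.degree = m
    · rw [if_pos ha, if_pos (by omega)]
    · rw [if_neg ha, zero_mul]
      rcases lt_or_gt_of_ne ha with ha | ha
      · rw [coeff_eq_zero_of_totalDegree_lt (by omega : g.totalDegree < b.degree), mul_zero]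
      · rw [coeff_eq_zero_of_totalDegree_lt (by omega : f.totalDegree < a.degree), zero_mul]
  · rw [coeff_homogeneousComponent, if_neg he, ((homogeneousComponent_isHomogeneous m f).mul
      (homogeneousComponent_isHomogeneous n g)).coeff_eq_zero he]

lemma homogeneousComponent_totalDegree_ne_zero [CommSemiring R]
    {p : MvPolynomial σ R} (hp : p ≠ 0) : homogeneousComponent p.totalDegree p ≠ 0 := by
  obtain ⟨e, he, hdeg⟩ :=
    p.support.exists_mem_eq_sup (support_nonempty.mpr hp) fun s => s.sum fun _ n => n
  have : coeff e (homogeneousComponent p.totalDegree p) = coeff e p := by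
    rw [coeff_homogeneousComponent, if_pos (by rw [totalDegree, hdeg]; rfl)]
  exact fun h0 => mem_support_iff.mp he (by rw [← this, h0, coeff_zero])

lemma eq_zero_of_sum_sq_eq_zero [Field R] [LinearOrder R] [IsStrictOrderedRing R] {ι : Type*}
    [Fintype ι] {f : ι → MvPolynomial σ R}
    (h : ∑ j, f j ^ 2 = 0) (j : ι) : f j = 0 := by
  refine MvPolynomial.funext fun x => ?_
  have hx : ∑ i, eval x (f i) ^ 2 = 0 := by simpa using congrArg (eval x) h
  simpa using (Finset.sum_eq_zero_iff_of_nonneg fun i _ => sq_nonneg (eval x (f i))).mp hx j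
    (Finset.mem_univ j)

/-- The top homogeneous components of the squares cannot cancel. -/
lemma totalDegree_le_of_totalDegree_sum_sq_le [Field R] [LinearOrder R] [IsStrictOrderedRing R]
    {ι : Type*} [Fintype ι] {q : ι → MvPolynomial σ R} {M : ℕ}
    (h : (∑ j, q j ^ 2).totalDegree ≤ 2 * M) (j : ι) :
    (q j).totalDegree ≤ M := by
  by_contra! hj
  obtain ⟨j₁, -, hj₁⟩ :=
    Finset.univ.exists_mem_eq_sup ⟨j, Finset.mem_univ j⟩ fun i => (q i).totalDegree
  set T := (q j₁).totalDegree
  have hle : ∀ i, (q i).totalDegree ≤ T := fun i =>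
    hj₁ ▸ Finset.le_sup (f := fun i => (q i).totalDegree) (Finset.mem_univ i)
  have hT : M < T := hj.trans_le (hle j)
  have htop : ∑ i, homogeneousComponent T (q i) ^ 2 = 0 := by
    simp_rw [sq, ← homogeneousComponent_add_mul_of_totalDegree_le (hle _) (hle _), ← map_sum,
      ← sq]
    exact homogeneousComponent_eq_zero _ _ (by omega)
  have hne : q j₁ ≠ 0 := fun h0 => by simp [T, h0] at hT
  exact homogeneousComponent_totalDegree_ne_zero hne (eq_zero_of_sum_sq_eq_zero htop j₁)

end MvPolynomial

open Matrix Equiv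

namespace MonIdx

variable {N D : ℕ}

instance : MulAction (Perm (Fin N)) (MonIdx N D) where
  smul := permIdx
  one_smul _ := rfl
  mul_smul _ _ _ := rfl

lemma permIdx_eq_smul (π : Perm (Fin N)) (m : MonIdx N D) : permIdx π m = π • m := rfl

noncomputable def toFinsupp (m : MonIdx N D) : Fin N →₀ ℕ :=
  Finsupp.equivFunOnFinite.symm fun i => m.1 i

@[simp] lemma toFinsupp_apply (m : MonIdx N D) (i : Fin N) : m.toFinsupp i = m.1 i := rfl

lemma toFinsupp_injective : Function.Injective (toFinsupp (N := N) (D := D)) := by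
  intro a b h
  exact Subtype.ext <| funext fun i => Fin.ext (DFunLike.congr_fun h i)

lemma degree_toFinsupp (m : MonIdx N D) : m.toFinsupp.degree ≤ D := by
  simpa [Finsupp.degree_eq_sum, toFinsupp] using m.2

lemma exists_toFinsupp_eq {e : Fin N →₀ ℕ} (he : e.degree ≤ D) :
    ∃ m : MonIdx N D, m.toFinsupp = e := by
  rw [Finsupp.degree_eq_sum] at he
  refine ⟨⟨fun i => ⟨e i, Nat.lt_succ_of_le ((Finset.single_le_sum (fun _ _ => Nat.zero_le _)
    (Finset.mem_univ i)).trans he)⟩, by simpa using he⟩, ?_⟩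
  ext i
  rfl

end MonIdx

open MonIdx

section Gram

variable {N D : ℕ}

lemma monOf_eq_monomial (m : MonIdx N D) : monOf m = monomial m.toFinsupp 1 := by
  rw [monOf, ← prod_X_pow_eq_monomial]
  refine (Finset.prod_subset (Finset.subset_univ _) fun i _ hi => ?_).symm
  have h0 : (m.1 i : ℕ) = 0 := Finsupp.notMem_support_iff.mp hi
  rw [h0, pow_zero]

lemma totalDegree_monOf_le (m : MonIdx N D) : (monOf m).totalDegree ≤ D := by
  rw [monOf_eq_monomial, totalDegree_monomial _ one_ne_zero]
  exact m.degree_toFinsupp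

lemma rename_monOf (π : Perm (Fin N)) (m : MonIdx N D) :
    rename π (monOf m) = monOf (π • m) := by
  simp only [monOf, map_prod, map_pow, rename_X]
  exact Fintype.prod_equiv π _ _ fun i => by
    simp [← permIdx_eq_smul, permIdx]

noncomputable def monomialSum (a : MonIdx N D → ℝ) : MvPolynomial (Fin N) ℝ :=
  ∑ u, C (a u) * monOf u

lemma monomialSum_coeff {q : MvPolynomial (Fin N) ℝ} (hq : q.totalDegree ≤ D) :
    monomialSum (fun u : MonIdx N D => coeff u.toFinsupp q) = q := by
  have hsupp : q.support ⊆ Finset.univ.map ⟨toFinsupp, toFinsupp_injective⟩ := fun e he => by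
    obtain ⟨m, rfl⟩ := exists_toFinsupp_eq ((le_totalDegree he).trans hq)
    exact Finset.mem_map_of_mem _ (Finset.mem_univ m)
  simp only [monomialSum, monOf_eq_monomial, C_mul_monomial, mul_one]
  calc ∑ u : MonIdx N D, monomial u.toFinsupp (coeff u.toFinsupp q)
      = ∑ e ∈ Finset.univ.map ⟨toFinsupp, toFinsupp_injective⟩, monomial e (coeff e q) :=
        by rw [Finset.sum_map]; rfl
    _ = ∑ e ∈ q.support, monomial e (coeff e q) :=
        (Finset.sum_subset hsupp fun e _ he => by
          rw [notMem_support_iff.mp he, monomial_zero]).symm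
    _ = q := support_sum_monomial_coeff q

/-- The Gram form `[x]_Dᵀ Q [x]_D`. -/
noncomputable def gramPoly :
    Matrix (MonIdx N D) (MonIdx N D) ℝ →ₗ[ℝ] MvPolynomial (Fin N) ℝ where
  toFun Q := ∑ u, ∑ v, C (Q u v) * monOf u * monOf v
  map_add' Q Q' := by simp only [Matrix.add_apply, C_add, add_mul, Finset.sum_add_distrib]
  map_smul' c Q := by
    simp only [Matrix.smul_apply, smul_eq_mul, C_mul, Finset.smul_sum, smul_eq_C_mul,
      RingHom.id_apply, mul_assoc]

lemma gramPoly_apply (Q : Matrix (MonIdx N D) (MonIdx N D) ℝ) :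
    gramPoly Q = ∑ u, ∑ v, C (Q u v) * monOf u * monOf v := rfl

lemma gramPoly_vecMulVec (a : MonIdx N D → ℝ) :
    gramPoly (vecMulVec a a) = monomialSum a ^ 2 := by
  simp only [gramPoly_apply, monomialSum, vecMulVec_apply, C_mul, sq, Finset.sum_mul_sum]
  exact Finset.sum_congr rfl fun u _ => Finset.sum_congr rfl fun v _ => by ring

lemma totalDegree_gramPoly_le (Q : Matrix (MonIdx N D) (MonIdx N D) ℝ) :
    (gramPoly Q).totalDegree ≤ 2 * D := by
  refine totalDegree_finsetSum_le fun u _ => totalDegree_finsetSum_le fun v _ => ?_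
  calc (C (Q u v) * monOf u * monOf v).totalDegree
      ≤ (C (Q u v)).totalDegree + (monOf u).totalDegree + (monOf v).totalDegree :=
        (totalDegree_mul _ _).trans (Nat.add_le_add_right (totalDegree_mul _ _) _)
    _ ≤ 2 * D := by
        have := totalDegree_monOf_le u
        have := totalDegree_monOf_le v
        rw [totalDegree_C]
        omega

lemma gramPoly_submatrix_inv_smul (π : Perm (Fin N))
    (Q : Matrix (MonIdx N D) (MonIdx N D) ℝ) :
    gramPoly (Q.submatrix (π⁻¹ • ·) (π⁻¹ • ·)) = rename π (gramPoly Q) := by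
  simp only [gramPoly_apply, map_sum, map_mul, rename_C, rename_monOf, submatrix_apply]
  refine Fintype.sum_equiv (MulAction.toPerm π⁻¹) _ _ fun u => ?_
  refine Fintype.sum_equiv (MulAction.toPerm π⁻¹) _ _ fun v => ?_
  simp

lemma IsSOS.rename {p : MvPolynomial (Fin N) ℝ} (hp : IsSOS p) (π : Perm (Fin N)) :
    IsSOS (MvPolynomial.rename π p) := by
  obtain ⟨k, q, rfl⟩ := hp
  exact ⟨k, fun j => MvPolynomial.rename π (q j), by simp⟩

lemma isSOS_gramPoly {Q : Matrix (MonIdx N D) (MonIdx N D) ℝ} (hQ : Q.PosSemidef) :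
    IsSOS (gramPoly Q) := by
  obtain ⟨k, a, rfl⟩ := posSemidef_iff_eq_sum_vecMulVec.mp hQ
  exact ⟨k, fun j => monomialSum (a j), by simp [gramPoly_vecMulVec]⟩

lemma exists_posSemidef_gramPoly_eq {p : MvPolynomial (Fin N) ℝ} (hp : IsSOS p)
    (hdeg : p.totalDegree ≤ 2 * D) :
    ∃ Q : Matrix (MonIdx N D) (MonIdx N D) ℝ, Q.PosSemidef ∧ gramPoly Q = p := by
  obtain ⟨k, q, rfl⟩ := hp
  let a : Fin k → MonIdx N D → ℝ := fun j u => coeff u.toFinsupp (q j)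
  refine ⟨∑ j, vecMulVec (a j) (a j), posSemidef_iff_eq_sum_vecMulVec.mpr ⟨k, a, by simp⟩, ?_⟩
  simp only [map_sum, gramPoly_vecMulVec, a,
    monomialSum_coeff (totalDegree_le_of_totalDegree_sum_sq_le hdeg _)]

end Gram

section PermAverage

variable {ι K : Type*} [Fintype ι] [DecidableEq ι] [Field K]

noncomputable def permAverage (f : Perm ι → MvPolynomial ι K) : MvPolynomial ι K :=
  (Fintype.card (Perm ι) : K)⁻¹ • ∑ ρ : Perm ι, rename ρ (f ρ)

lemma rename_permAverage (π : Perm ι) (f : Perm ι → MvPolynomial ι K) :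
    rename π (permAverage f) = permAverage fun ρ => f (π⁻¹ * ρ) := by
  simp only [permAverage, map_smul, map_sum, rename_rename]
  congr 1
  exact Fintype.sum_equiv (Equiv.mulLeft π) _ _ fun ρ => by simp

lemma eq_permAverage_certificate [CharZero K] {p σ₀ : MvPolynomial ι K}
    {σ : ι → MvPolynomial ι K} (hp : ∀ π : Perm ι, rename π p = p)
    (hσ : p = σ₀ + ∑ i, σ i * (X i - X i ^ 2)) (j : ι) :
    p = permAverage (fun _ => σ₀) +
      ∑ i, rename (swap i j) (permAverage fun ρ => σ (ρ⁻¹ j)) * (X i - X i ^ 2) := by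
  have hrename (ρ : Perm ι) :
      rename ρ p = rename ρ σ₀ + ∑ i, rename ρ (σ (ρ⁻¹ i)) * (X i - X i ^ 2) := by
    rw [hσ, map_add, map_sum]
    congr 1
    exact Fintype.sum_equiv ρ _ _ fun i => by simp
  have hp_avg : permAverage (fun _ => p) = p := by
    simp only [permAverage, hp, Finset.sum_const, Finset.card_univ, ← Nat.cast_smul_eq_nsmul K,
      smul_smul]
    rw [inv_mul_cancel₀ (Nat.cast_ne_zero.mpr (Fintype.card_ne_zero (α := Perm ι))), one_smul]
  simp only [rename_permAverage, _root_.mul_inv_rev, swap_inv, Perm.mul_apply, swap_apply_right]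
  conv_lhs => rw [← hp_avg]
  simp only [permAverage, hrename, Finset.sum_add_distrib, smul_add, Finset.sum_comm (γ := ι),
    Finset.smul_sum, Finset.sum_mul, smul_mul_assoc]

end PermAverage

section MatrixAverage

variable {N D : ℕ}

noncomputable def matrixAverage (F : Perm (Fin N) → Matrix (MonIdx N D) (MonIdx N D) ℝ) :
    Matrix (MonIdx N D) (MonIdx N D) ℝ :=
  (Fintype.card (Perm (Fin N)) : ℝ)⁻¹ • ∑ ρ, (F ρ).submatrix (ρ⁻¹ • ·) (ρ⁻¹ • ·)

variable {F : Perm (Fin N) → Matrix (MonIdx N D) (MonIdx N D) ℝ}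

lemma posSemidef_matrixAverage (hF : ∀ ρ, (F ρ).PosSemidef) : (matrixAverage F).PosSemidef :=
  (posSemidef_sum _ fun ρ _ => (hF ρ).submatrix _).smul (by positivity)

lemma gramPoly_matrixAverage :
    gramPoly (matrixAverage F) = permAverage fun ρ => gramPoly (F ρ) := by
  simp only [matrixAverage, permAverage, map_smul, map_sum, gramPoly_submatrix_inv_smul]

lemma matrixAverage_smul_apply {π : Perm (Fin N)} (hF : ∀ ρ, F (π * ρ) = F ρ)
    (u v : MonIdx N D) : matrixAverage F (π • u) (π • v) = matrixAverage F u v := by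
  simp only [matrixAverage, Matrix.smul_apply, Matrix.sum_apply, submatrix_apply]
  congr 1
  refine Fintype.sum_equiv (Equiv.mulLeft π⁻¹) _ _ fun ρ => ?_
  simp [← hF (π⁻¹ * ρ), mul_smul]

end MatrixAverage

/-- The variables are indexed by `Fin (n+1)` and the distinguished index `n` is `Fin.last n`. -/
theorem symmetric_certificate_gram_iff (n d : ℕ) (p : MvPolynomial (Fin (n + 1)) ℝ)
    (hp : ∀ π : Equiv.Perm (Fin (n + 1)), rename π p = p) :
    InQuadModule (n + 1) d p ↔
      ∃ (Q : Matrix (MonIdx (n + 1) d) (MonIdx (n + 1) d) ℝ)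
        (R : Matrix (MonIdx (n + 1) (d - 1)) (MonIdx (n + 1) (d - 1)) ℝ),
        Q.PosSemidef ∧ R.PosSemidef ∧
        (∀ (π : Equiv.Perm (Fin (n + 1))) (u v : MonIdx (n + 1) d),
          Q (permIdx π u) (permIdx π v) = Q u v) ∧
        (∀ π : Equiv.Perm (Fin (n + 1)), π (Fin.last n) = Fin.last n →
          ∀ u v : MonIdx (n + 1) (d - 1), R (permIdx π u) (permIdx π v) = R u v) ∧
        p = (∑ u, ∑ v, C (Q u v) * monOf u * monOf v) +
            ∑ i, (rename (Equiv.swap i (Fin.last n))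
                    (∑ u, ∑ v, C (R u v) * monOf u * monOf v)) * (X i - (X i) ^ 2) := by
  simp only [← gramPoly_apply, permIdx_eq_smul]
  constructor
  · rintro ⟨σ₀, σ, hσ₀, hσ, hdeg₀, hdeg, hpσ⟩
    obtain ⟨Q, hQ, rfl⟩ := exists_posSemidef_gramPoly_eq (D := d) hσ₀ hdeg₀
    choose R hR hRσ using fun i =>
      exists_posSemidef_gramPoly_eq (D := d - 1) (hσ i) ((hdeg i).trans (by omega))
    refine ⟨matrixAverage fun _ => Q, matrixAverage fun ρ => R (ρ⁻¹ (Fin.last n)),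
      posSemidef_matrixAverage fun _ => hQ, posSemidef_matrixAverage fun _ => hR _,
      fun π => matrixAverage_smul_apply fun _ => rfl,
      fun π hπ => matrixAverage_smul_apply fun ρ => ?_, ?_⟩
    · rw [_root_.mul_inv_rev, Perm.mul_apply, Perm.inv_eq_iff_eq.mpr hπ.symm]
    · simp only [gramPoly_matrixAverage, hRσ]
      exact eq_permAverage_certificate hp hpσ (Fin.last n)
  · rintro ⟨Q, R, hQ, hR, -, -, rfl⟩
    refine ⟨gramPoly Q, fun i => rename (swap i (Fin.last n)) (gramPoly R), isSOS_gramPoly hQ,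
      fun i => (isSOS_gramPoly hR).rename _, totalDegree_gramPoly_le Q, fun i => ?_, rfl⟩
    have := totalDegree_gramPoly_le R
    exact (totalDegree_rename_le _ _).trans (by omega)
end

section
/- For n = 4, the polynomial x_1x_2x_3x_4 + 1/24 belongs to the degree-4 truncated quadratic module M_{4,4}(g): there exist sums of squares σ_0, σ_1, …, σ_4 ∈ ℝ[x_1,…,x_4] with deg σ_0 ≤ 4 and deg σ_i ≤ 2 for i = 1,…,4 such that x_1x_2x_3x_4 + 1/24 = σ_0 + Σ_{i=1}^4 σ_i·(x_i - x_i²). -/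
open MvPolynomial

namespace Cert4

noncomputable section

abbrev R4 := MvPolynomial (Fin 4) ℝ

def s : R4 := X 0 + X 1 + X 2 + X 3

def g (i : Fin 4) : R4 := X i - X i ^ 2

def q1 : R4 :=
  1 - s - (X 0 ^ 2 + X 1 ^ 2 + X 2 ^ 2 + X 3 ^ 2)
    + 2 * (X 0 * X 1 + X 0 * X 2 + X 0 * X 3 + X 1 * X 2 + X 1 * X 3 + X 2 * X 3)

def q2 : R4 := 3 * g 0 - g 1 - g 2 - g 3
def q3 : R4 := 2 * g 1 - g 2 - g 3
def q4 : R4 := g 2 - g 3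

def P0 : R4 := 6 * q1 ^ 2 + 2 * q2 ^ 2 + 4 * q3 ^ 2 + 12 * q4 ^ 2

def Pi' (i : Fin 4) : R4 :=
  3 * (2 - (s - X i)) ^ 2 + 6 * (2 * X i - (s - X i)) ^ 2 + 3 * (s - X i) ^ 2

def σ0 : R4 := C (1 / 144 : ℝ) * P0

def σi (i : Fin 4) : R4 := C (1 / 144 : ℝ) * Pi' i

/- ### degree bound helpers -/

lemma deg_add_le {p q : R4} {d : ℕ} (hp : p.totalDegree ≤ d) (hq : q.totalDegree ≤ d) :
    (p + q).totalDegree ≤ d :=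
  le_trans (totalDegree_add p q) (max_le hp hq)

lemma deg_sub_le {p q : R4} {d : ℕ} (hp : p.totalDegree ≤ d) (hq : q.totalDegree ≤ d) :
    (p - q).totalDegree ≤ d := by
  rw [sub_eq_add_neg]
  exact deg_add_le hp (by rwa [totalDegree_neg])

lemma deg_num_mul_le {p : R4} {d : ℕ} (c : ℝ) (hp : p.totalDegree ≤ d) :
    ((C c : R4) * p).totalDegree ≤ d :=
  le_trans (totalDegree_mul _ _) (by simpa [totalDegree_C] using hp)

lemma num_eq (n : ℕ) [n.AtLeastTwo] :
    (OfNat.ofNat n : R4) = C (OfNat.ofNat n : ℝ) := (map_ofNat C n).symm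

lemma deg_num_mul_le' {p : R4} {d : ℕ} (n : ℕ) [n.AtLeastTwo] (hp : p.totalDegree ≤ d) :
    ((OfNat.ofNat n : R4) * p).totalDegree ≤ d := by
  rw [num_eq n]; exact deg_num_mul_le _ hp

lemma deg_sq_le {p : R4} {d : ℕ} (hp : p.totalDegree ≤ d) :
    (p ^ 2).totalDegree ≤ 2 * d :=
  le_trans (totalDegree_pow p 2) (by omega)

lemma deg_X_le (i : Fin 4) : (X i : R4).totalDegree ≤ 1 := le_of_eq (totalDegree_X i)

lemma deg_one_le {d : ℕ} : (1 : R4).totalDegree ≤ d := by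
  rw [totalDegree_one]; exact Nat.zero_le d

lemma deg_num_le {d : ℕ} (n : ℕ) [n.AtLeastTwo] :
    (OfNat.ofNat n : R4).totalDegree ≤ d := by
  rw [num_eq n, totalDegree_C]; exact Nat.zero_le d

lemma deg_X_le' (i : Fin 4) : (X i : R4).totalDegree ≤ 2 :=
  le_trans (deg_X_le i) (by omega)

lemma deg_Xsq_le (i : Fin 4) : ((X i : R4) ^ 2).totalDegree ≤ 2 := by
  exact le_trans (deg_sq_le (deg_X_le i)) (by omega)

lemma deg_s_le : s.totalDegree ≤ 1 := by
  unfold s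
  exact deg_add_le (deg_add_le (deg_add_le (deg_X_le 0) (deg_X_le 1)) (deg_X_le 2)) (deg_X_le 3)

lemma deg_g_le (i : Fin 4) : (g i).totalDegree ≤ 2 := by
  unfold g
  exact deg_sub_le (deg_X_le' i) (deg_Xsq_le i)

lemma deg_XX_le (i j : Fin 4) : ((X i : R4) * X j).totalDegree ≤ 2 :=
  le_trans (totalDegree_mul _ _) (by
    have h1 := totalDegree_X (R := ℝ) i
    have h2 := totalDegree_X (R := ℝ) j
    omega)

lemma deg_q1_le : q1.totalDegree ≤ 2 := by
  unfold q1
  refine deg_add_le (deg_sub_le (deg_sub_le deg_one_le ?_) ?_) (deg_num_mul_le' 2 ?_)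
  · exact le_trans deg_s_le (by omega)
  · exact deg_add_le (deg_add_le (deg_add_le (deg_Xsq_le 0) (deg_Xsq_le 1)) (deg_Xsq_le 2))
      (deg_Xsq_le 3)
  · exact deg_add_le (deg_add_le (deg_add_le (deg_add_le (deg_add_le (deg_XX_le 0 1)
      (deg_XX_le 0 2)) (deg_XX_le 0 3)) (deg_XX_le 1 2)) (deg_XX_le 1 3)) (deg_XX_le 2 3)

lemma deg_q2_le : q2.totalDegree ≤ 2 := by
  unfold q2
  exact deg_sub_le (deg_sub_le (deg_sub_le (deg_num_mul_le' 3 (deg_g_le 0)) (deg_g_le 1))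
    (deg_g_le 2)) (deg_g_le 3)

lemma deg_q3_le : q3.totalDegree ≤ 2 := by
  unfold q3
  exact deg_sub_le (deg_sub_le (deg_num_mul_le' 2 (deg_g_le 1)) (deg_g_le 2)) (deg_g_le 3)

lemma deg_q4_le : q4.totalDegree ≤ 2 := by
  unfold q4
  exact deg_sub_le (deg_g_le 2) (deg_g_le 3)

lemma deg_P0_le : P0.totalDegree ≤ 4 := by
  unfold P0
  have h1 : (q1 ^ 2).totalDegree ≤ 4 := by simpa using deg_sq_le deg_q1_le
  have h2 : (q2 ^ 2).totalDegree ≤ 4 := by simpa using deg_sq_le deg_q2_le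
  have h3 : (q3 ^ 2).totalDegree ≤ 4 := by simpa using deg_sq_le deg_q3_le
  have h4 : (q4 ^ 2).totalDegree ≤ 4 := by simpa using deg_sq_le deg_q4_le
  exact deg_add_le (deg_add_le (deg_add_le (deg_num_mul_le' 6 h1) (deg_num_mul_le' 2 h2))
    (deg_num_mul_le' 4 h3)) (deg_num_mul_le' 12 h4)

lemma deg_sX_le (i : Fin 4) : (s - X i).totalDegree ≤ 1 :=
  deg_sub_le deg_s_le (deg_X_le i)

lemma deg_Pi_le (i : Fin 4) : (Pi' i).totalDegree ≤ 2 := by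
  unfold Pi'
  have h1 : ((2 - (s - X i)) ^ 2).totalDegree ≤ 2 := by
    simpa using deg_sq_le (deg_sub_le (deg_num_le 2) (deg_sX_le i))
  have h2 : ((2 * X i - (s - X i)) ^ 2).totalDegree ≤ 2 := by
    simpa using deg_sq_le (deg_sub_le (deg_num_mul_le' 2 (deg_X_le i)) (deg_sX_le i))
  have h3 : (((s - X i)) ^ 2).totalDegree ≤ 2 := by
    simpa using deg_sq_le (deg_sX_le i)
  exact deg_add_le (deg_add_le (deg_num_mul_le' 3 h1) (deg_num_mul_le' 6 h2))
    (deg_num_mul_le' 3 h3)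

/- ### SOS decompositions -/

lemma sqrt_mul_sq (c : ℝ) (hc : 0 ≤ c) (p : R4) :
    (C (Real.sqrt c) * p) ^ 2 = C c * p ^ 2 := by
  rw [mul_pow, ← map_pow, Real.sq_sqrt hc]

lemma isSOS_σ0 : IsSOS σ0 := by
  refine ⟨4, ![C (Real.sqrt (1/24)) * q1, C (Real.sqrt (1/72)) * q2,
    C (Real.sqrt (1/36)) * q3, C (Real.sqrt (1/12)) * q4], ?_⟩
  rw [Fin.sum_univ_four]
  simp only [Matrix.cons_val_zero, Matrix.cons_val_one, Matrix.head_cons,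
    Matrix.cons_val_two, Matrix.tail_cons, Matrix.cons_val_three]
  rw [sqrt_mul_sq _ (by norm_num), sqrt_mul_sq _ (by norm_num),
    sqrt_mul_sq _ (by norm_num), sqrt_mul_sq _ (by norm_num)]
  have e1 : (C (1/24 : ℝ) : R4) = C (1/144 : ℝ) * C (6 : ℝ) := by
    rw [← C_mul]; norm_num
  have e2 : (C (1/72 : ℝ) : R4) = C (1/144 : ℝ) * C (2 : ℝ) := by
    rw [← C_mul]; norm_num
  have e3 : (C (1/36 : ℝ) : R4) = C (1/144 : ℝ) * C (4 : ℝ) := by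
    rw [← C_mul]; norm_num
  have e4 : (C (1/12 : ℝ) : R4) = C (1/144 : ℝ) * C (12 : ℝ) := by
    rw [← C_mul]; norm_num
  rw [e1, e2, e3, e4, map_ofNat, map_ofNat, map_ofNat, map_ofNat]
  unfold σ0 P0
  ring

lemma isSOS_σi (i : Fin 4) : IsSOS (σi i) := by
  refine ⟨3, ![C (Real.sqrt (1/48)) * (2 - (s - X i)),
    C (Real.sqrt (1/24)) * (2 * X i - (s - X i)),
    C (Real.sqrt (1/48)) * (s - X i)], ?_⟩
  rw [Fin.sum_univ_three]
  simp only [Matrix.cons_val_zero, Matrix.cons_val_one, Matrix.head_cons,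
    Matrix.cons_val_two, Matrix.tail_cons]
  rw [sqrt_mul_sq _ (by norm_num), sqrt_mul_sq _ (by norm_num),
    sqrt_mul_sq _ (by norm_num)]
  have e1 : (C (1/48 : ℝ) : R4) = C (1/144 : ℝ) * C (3 : ℝ) := by
    rw [← C_mul]; norm_num
  have e2 : (C (1/24 : ℝ) : R4) = C (1/144 : ℝ) * C (6 : ℝ) := by
    rw [← C_mul]; norm_num
  rw [e1, e2, map_ofNat, map_ofNat]
  unfold σi Pi'
  ring

/- ### the main polynomial identity -/

lemma collapse :
    P0 + ∑ i, Pi' i * (X i - (X i) ^ 2) = 144 * (X 0 * X 1 * X 2 * X 3) + 6 := by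
  rw [Fin.sum_univ_four]
  unfold P0 Pi' q1 q2 q3 q4 s g
  ring

lemma main_identity :
    (∏ i : Fin 4, X i) + C (1 / 24 : ℝ) = σ0 + ∑ i, σi i * (X i - (X i) ^ 2) := by
  have step1 : σ0 + ∑ i, σi i * (X i - (X i) ^ 2)
      = C (1/144 : ℝ) * (P0 + ∑ i, Pi' i * (X i - (X i) ^ 2)) := by
    unfold σ0 σi
    rw [Fin.sum_univ_four, Fin.sum_univ_four]
    ring
  rw [step1, collapse, Fin.prod_univ_four]
  rw [show ((144 : R4)) = C (144 : ℝ) from (map_ofNat _ _).symm,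
    show ((6 : R4)) = C (6 : ℝ) from (map_ofNat _ _).symm]
  rw [mul_add, ← mul_assoc, ← C_mul, ← C_mul]
  norm_num

end

end Cert4

theorem product_plus_one_over_24_in_module_n4 :
    InQuadModule 4 2 ((∏ i : Fin 4, X i) + C (1 / 24 : ℝ)) := by
  refine ⟨Cert4.σ0, Cert4.σi, Cert4.isSOS_σ0, Cert4.isSOS_σi, ?_, ?_, Cert4.main_identity⟩
  · show Cert4.σ0.totalDegree ≤ 4
    unfold Cert4.σ0
    exact Cert4.deg_num_mul_le _ Cert4.deg_P0_le
  · intro i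
    show (Cert4.σi i).totalDegree ≤ 2
    unfold Cert4.σi
    exact Cert4.deg_num_mul_le _ (Cert4.deg_Pi_le i)
end

section
/- Let p ∈ ℝ[x_1,…,x_n] be multilinear (degree at most 1 in each variable). If there exist polynomials q_1, …, q_m ∈ ℝ[x_1,…,x_n] with deg q_j ≤ d for all j such that p - Σ_{j=1}^m q_j² belongs to the Boolean ideal I_n, then p belongs to the degree-2d truncated preordering T_{n,2d}(g). -/
open MvPolynomial

/-- Membership in the degree-`2d` truncated preordering `T_{n,2d}(g)` generated by
`g_i = x_i - x_i^2`, with `g_S = ∏_{i ∈ S} g_i`. -/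
def InPreordering (n d : ℕ) (p : MvPolynomial (Fin n) ℝ) : Prop :=
  ∃ σ : Finset (Fin n) → MvPolynomial (Fin n) ℝ,
    (∀ S, IsSOS (σ S)) ∧
    (∀ S : Finset (Fin n),
      (σ S * ∏ i ∈ S, (X i - (X i) ^ 2)).totalDegree ≤ 2 * d) ∧
    p = ∑ S : Finset (Fin n), σ S * ∏ i ∈ S, (X i - (X i) ^ 2)

/-- The Boolean ideal `I_n = ⟨x_1² - x_1, …, x_n² - x_n⟩`. -/
noncomputable def booleanIdeal (n : ℕ) : Ideal (MvPolynomial (Fin n) ℝ) :=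
  Ideal.span (Set.range fun i : Fin n => (X i) ^ 2 - X i)

/-!
Reduce each `q_j` modulo `I_n` to a multilinear `r_j` of degree at most `d` (division by the
`x_i² - x_i` with respect to the degree-lexicographic order). For a multilinear `q` let `Δ_S q` be
`q` divided by `∏_{i ∈ S} x_i`, terms not divisible by it discarded. Then
`Σ_S (Δ_S q)² g_S` agrees with `q²` on `{0,1}ⁿ`, where `g_S` vanishes for `S ≠ ∅`, and it is
again multilinear, by induction on the set `V` of variables of `q`: splitting `q = A + x_i B`
with `A`, `B` free of `x_i`, the identity
`(A + x_i B)² + (x_i - x_i²) B² = (1 - x_i) A² + x_i (A + B)²`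
writes the sum for `q` over the subsets of `V ∪ {i}` as `(1 - x_i)` times the sum for `A` plus
`x_i` times the sum for `A + B`, both over the subsets of `V`.
Hence `Σ_j Σ_S (Δ_S r_j)² g_S` and `p` are multilinear and agree on the cube, so they are equal;
the degree bound holds because `Δ_S` lowers the degree by `|S|`.
-/

namespace MvPolynomial

open Finset

variable {σ R : Type*} [CommRing R]

def IsMultilinearIn (V : Finset σ) (f : MvPolynomial σ R) : Prop :=
  ∀ j, f.degreeOf j ≤ (V : Set σ).indicator 1 j

theorem isMultilinearIn_univ [Fintype σ] {f : MvPolynomial σ R} :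
    IsMultilinearIn univ f ↔ ∀ i, f.degreeOf i ≤ 1 := by
  simp [IsMultilinearIn]

theorem degreeOf_divMonomial_le (f : MvPolynomial σ R) (s : σ →₀ ℕ) (j : σ) :
    (f.divMonomial s).degreeOf j ≤ f.degreeOf j := by
  refine degreeOf_le_iff.mpr fun m hm =>
    le_trans ?_ (le_degreeOf_of_mem_support j (s := s + m) (by simpa using hm))
  simp

theorem degreeOf_modMonomial_le (f : MvPolynomial σ R) (s : σ →₀ ℕ) (j : σ) :
    (f.modMonomial s).degreeOf j ≤ f.degreeOf j := by
  refine degreeOf_le_iff.mpr fun m hm => le_degreeOf_of_mem_support j ?_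
  by_cases h : s ≤ m
  · simp [coeff_modMonomial_of_le _ h] at hm
  · simpa [coeff_modMonomial_of_not_le _ h] using hm

theorem X_mul_divMonomial_of_apply_eq_zero {s : σ →₀ ℕ} {i : σ} (h : s i = 0)
    (f : MvPolynomial σ R) : (X i * f).divMonomial s = X i * f.divMonomial s := by
  classical
  ext m
  rw [coeff_divMonomial, coeff_X_mul', coeff_X_mul', coeff_divMonomial]
  by_cases hm : i ∈ m.support
  · have hsm : i ∈ (s + m).support := by simpa [h] using hm
    rw [if_pos hsm, if_pos hm, add_tsub_assoc_of_le
      (Finsupp.single_le_iff.mpr (Nat.one_le_iff_ne_zero.mpr (Finsupp.mem_support_iff.mp hm)))]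
  · have hsm : i ∉ (s + m).support := by simpa [h] using hm
    rw [if_neg hsm, if_neg hm]

theorem totalDegree_divMonomial_add_le {f : MvPolynomial σ R} {s : σ →₀ ℕ}
    (h : f.divMonomial s ≠ 0) : (f.divMonomial s).totalDegree + s.degree ≤ f.totalDegree := by
  obtain ⟨m, hm, hdeg⟩ := exists_mem_eq_sup _ (support_nonempty.mpr h)
    (fun m : σ →₀ ℕ => m.sum fun _ e => e)
  have hsm := le_totalDegree (p := f) (s := s + m) (by simpa using hm)
  rw [totalDegree, hdeg]
  simp only [Finsupp.sum, ← Finsupp.degree_apply, map_add] at hsm ⊢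
  omega

namespace IsMultilinearIn

variable {V : Finset σ} {f g : MvPolynomial σ R} {i : σ}

theorem add (hf : IsMultilinearIn V f) (hg : IsMultilinearIn V g) :
    IsMultilinearIn V (f + g) :=
  fun j => (degreeOf_add_le j f g).trans (max_le (hf j) (hg j))

theorem sub (hf : IsMultilinearIn V f) (hg : IsMultilinearIn V g) :
    IsMultilinearIn V (f - g) :=
  fun j => (degreeOf_sub_le j f g).trans (max_le (hf j) (hg j))

theorem sum {ι : Type*} {s : Finset ι} {f : ι → MvPolynomial σ R}
    (hf : ∀ k ∈ s, IsMultilinearIn V (f k)) : IsMultilinearIn V (∑ k ∈ s, f k) :=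
  fun j => (degreeOf_sum_le j s f).trans (Finset.sup_le fun k hk => hf k hk j)

variable [DecidableEq σ]

theorem add_X_mul [Nontrivial R] (hi : i ∉ V) (hf : IsMultilinearIn V f)
    (hg : IsMultilinearIn V g) : IsMultilinearIn (insert i V) (f + X i * g) := by
  intro j
  refine (degreeOf_add_le j _ _).trans
    (max_le ((hf j).trans ?_) ((degreeOf_mul_le j _ _).trans ?_))
  · exact Set.indicator_le_indicator_of_subset (by simp) (by simp) j
  · have := hg j
    rw [degreeOf_X]
    rcases eq_or_ne j i with rfl | hji
    · simp_all
    · simp_all [Set.indicator_apply]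

theorem modMonomial_single (hf : IsMultilinearIn (insert i V) f) :
    IsMultilinearIn V (f.modMonomial (Finsupp.single i 1)) := by
  intro j
  rcases eq_or_ne j i with rfl | hji
  · refine (degreeOf_le_iff.mpr fun m hm => ?_).trans (Nat.zero_le _)
    by_cases h : Finsupp.single j 1 ≤ m
    · simp [coeff_modMonomial_of_le _ h] at hm
    · simpa [Finsupp.single_le_iff] using h
  · simpa [hji, Set.indicator_apply] using (degreeOf_modMonomial_le f _ j).trans (hf j)

theorem divMonomial_single (hf : IsMultilinearIn (insert i V) f) :
    IsMultilinearIn V (f.divMonomial (Finsupp.single i 1)) := by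
  intro j
  rcases eq_or_ne j i with rfl | hji
  · refine (degreeOf_le_iff.mpr fun m hm => ?_).trans (Nat.zero_le _)
    have h := (le_degreeOf_of_mem_support j (by simpa using hm)).trans (hf j)
    simp only [Finsupp.coe_add, Pi.add_apply, Finsupp.single_eq_same, coe_insert,
      Set.mem_insert_iff, true_or, Set.indicator_of_mem, Pi.one_apply] at h
    omega
  · simpa [hji, Set.indicator_apply] using (degreeOf_divMonomial_le f _ j).trans (hf j)

end IsMultilinearIn

noncomputable def sqfreeExp (S : Finset σ) : σ →₀ ℕ := ∑ i ∈ S, Finsupp.single i 1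

theorem sqfreeExp_apply_of_notMem {S : Finset σ} {i : σ} (h : i ∉ S) : sqfreeExp S i = 0 := by
  classical
  simp only [sqfreeExp, Finsupp.finsetSum_apply, Finsupp.single_apply]
  exact sum_eq_zero fun j hj => if_neg (ne_of_mem_of_not_mem hj h)

theorem sqfreeExp_insert [DecidableEq σ] {S : Finset σ} {i : σ} (h : i ∉ S) :
    sqfreeExp (insert i S) = Finsupp.single i 1 + sqfreeExp S :=
  sum_insert h

theorem degree_sqfreeExp (S : Finset σ) : (sqfreeExp S).degree = #S := by
  simp [sqfreeExp, map_sum]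

variable (R) in
noncomputable def cubeProd (S : Finset σ) : MvPolynomial σ R := ∏ i ∈ S, (X i - X i ^ 2)

theorem cubeProd_insert [DecidableEq σ] {S : Finset σ} {i : σ} (h : i ∉ S) :
    cubeProd R (insert i S) = (X i - X i ^ 2) * cubeProd R S :=
  prod_insert h

theorem totalDegree_cubeProd_le (S : Finset σ) : (cubeProd R S).totalDegree ≤ 2 * #S := by
  refine (totalDegree_finsetProd _ _).trans
    ((sum_le_card_nsmul _ _ 2 fun i _ => ?_).trans_eq (by simp [mul_comm]))
  refine (totalDegree_sub _ _).trans
    (max_le ((totalDegree_monomial_le (Finsupp.single i 1) 1).trans (by simp)) ?_)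
  rw [X_pow_eq_monomial]
  exact (totalDegree_monomial_le _ _).trans (by simp)

theorem totalDegree_sq_divMonomial_mul_cubeProd_le (q : MvPolynomial σ R) (S : Finset σ) :
    (q.divMonomial (sqfreeExp S) ^ 2 * cubeProd R S).totalDegree ≤ 2 * q.totalDegree := by
  by_cases h : q.divMonomial (sqfreeExp S) = 0
  · simp [h]
  have hdiv := totalDegree_divMonomial_add_le h
  rw [degree_sqfreeExp] at hdiv
  have := totalDegree_pow (q.divMonomial (sqfreeExp S)) 2
  have := totalDegree_cubeProd_le (R := R) S
  have := totalDegree_mul (q.divMonomial (sqfreeExp S) ^ 2) (cubeProd R S)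
  omega

noncomputable def sosCert (V : Finset σ) (q : MvPolynomial σ R) : MvPolynomial σ R :=
  ∑ S ∈ V.powerset, q.divMonomial (sqfreeExp S) ^ 2 * cubeProd R S

theorem sosCert_empty (q : MvPolynomial σ R) : sosCert ∅ q = q ^ 2 := by
  simp [sosCert, sqfreeExp, cubeProd, divMonomial_zero]

theorem sosCert_insert [DecidableEq σ] {V : Finset σ} {i : σ} (hi : i ∉ V)
    (q : MvPolynomial σ R) :
    sosCert (insert i V) q =
      (1 - X i) * sosCert V (q.modMonomial (Finsupp.single i 1)) +
        X i * sosCert V (q.modMonomial (Finsupp.single i 1) +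
          q.divMonomial (Finsupp.single i 1)) := by
  set A := q.modMonomial (Finsupp.single i 1)
  set B := q.divMonomial (Finsupp.single i 1)
  rw [sosCert, sum_powerset_insert hi, sosCert, sosCert, mul_sum, mul_sum, ← sum_add_distrib,
    ← sum_add_distrib]
  refine sum_congr rfl fun S hS => ?_
  have hiS : i ∉ S := fun h => hi (mem_powerset.mp hS h)
  have hq : q.divMonomial (sqfreeExp S) =
      A.divMonomial (sqfreeExp S) + X i * B.divMonomial (sqfreeExp S) := by
    conv_lhs => rw [← modMonomial_add_divMonomial_single q i]
    rw [add_divMonomial, X_mul_divMonomial_of_apply_eq_zero (sqfreeExp_apply_of_notMem hiS)]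
  rw [hq, sqfreeExp_insert hiS, divMonomial_add, cubeProd_insert hiS, add_divMonomial]
  ring

theorem IsMultilinearIn.sosCert [Nontrivial R] [DecidableEq σ] {V : Finset σ}
    {q : MvPolynomial σ R} (hq : IsMultilinearIn V q) : IsMultilinearIn V (sosCert V q) := by
  induction V using Finset.induction_on generalizing q with
  | empty =>
    intro j
    have hj := hq j
    simp only [coe_empty, Set.indicator_empty, Nat.le_zero] at hj ⊢
    simpa [sosCert_empty, hj] using degreeOf_pow_le j q 2
  | @insert i V hi ih =>
    have hA := hq.modMonomial_single
    have hAB := hA.add hq.divMonomial_single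
    rw [sosCert_insert hi, show ∀ a c : MvPolynomial σ R,
      (1 - X i) * a + X i * c = a + X i * (c - a) from fun a c => by ring]
    exact (ih hA).add_X_mul hi ((ih hAB).sub (ih hA))

open MonomialOrder in
theorem exists_degreeOf_le_one_sub_mem_span [LinearOrder σ] [WellFoundedGT σ] [IsDomain R]
    (f : MvPolynomial σ R) :
    ∃ r : MvPolynomial σ R, (∀ i, r.degreeOf i ≤ 1) ∧ r.totalDegree ≤ f.totalDegree ∧
      f - r ∈ Ideal.span (Set.range fun i => X i ^ 2 - X i) := by
  have hb : ∀ i, degLex.degree (X i * (X i - C 1) : MvPolynomial σ R) = Finsupp.single i 2 := by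
    intro i
    rw [degree_mul (X_ne_zero i) (monic_X_sub_C degLex i (1 : R)).ne_zero,
      degree_X (m := degLex), degree_X_sub_C degLex i 1, ← Finsupp.single_add]
  obtain ⟨g, r, hf, hdeg, hr⟩ := degLex.div (b := fun i => X i * (X i - C 1))
    (fun i => by
      rw [(monic_X.mul (monic_X_sub_C _ i 1)).leadingCoeff_eq_one]
      exact isUnit_one) f
  refine ⟨r, fun i => degreeOf_le_iff.mpr fun c hc => ?_, ?_, ?_⟩
  · have := hr c hc i
    rw [hb, Finsupp.single_le_iff] at this
    omega
  · apply degLex_totalDegree_monotone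
    rw [eq_sub_of_add_eq' hf.symm]
    refine degree_sub_le.trans (sup_le le_rfl ?_)
    rw [Finsupp.linearCombination_apply, Finsupp.sum]
    refine degree_sum_le.trans (Finset.sup_le fun i _ => ?_)
    simpa [smul_eq_mul, mul_comm] using hdeg i
  · rw [eq_sub_of_add_eq' hf.symm, sub_sub_cancel, Finsupp.linearCombination_apply]
    exact Ideal.sum_mem _ fun i _ =>
      Ideal.mul_mem_left _ _ (Ideal.subset_span ⟨i, by simp only [map_one]; ring⟩)

theorem eval_eq_zero_of_mem_span_sq_sub {x : σ → R} (hx : ∀ i, x i = 0 ∨ x i = 1)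
    {f : MvPolynomial σ R} (hf : f ∈ Ideal.span (Set.range fun i => X i ^ 2 - X i)) :
    eval x f = 0 := by
  refine (Ideal.span_le (I := RingHom.ker (eval x)).mpr ?_) hf
  rintro _ ⟨i, rfl⟩
  rcases hx i with h | h <;> simp [h]

theorem eval_sosCert {x : σ → R} (hx : ∀ i, x i = 0 ∨ x i = 1) (V : Finset σ)
    (q : MvPolynomial σ R) : eval x (sosCert V q) = eval x q ^ 2 := by
  rw [sosCert, map_sum, sum_eq_single ∅ (fun S _ hS => ?_) (by simp)]
  · simp [sqfreeExp, cubeProd, divMonomial_zero]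
  · obtain ⟨i, hi⟩ := nonempty_iff_ne_empty.mpr hS
    rw [map_mul, cubeProd, map_prod, prod_eq_zero hi (by rcases hx i with h | h <;> simp [h]),
      mul_zero]

theorem eq_of_eval_eq_of_degreeOf_le_one [IsDomain R] [Finite σ] {p q : MvPolynomial σ R}
    (hp : ∀ i, p.degreeOf i ≤ 1) (hq : ∀ i, q.degreeOf i ≤ 1)
    (h : ∀ x : σ → R, (∀ i, x i = 0 ∨ x i = 1) → eval x p = eval x q) : p = q := by
  classical
  refine sub_eq_zero.mp (eq_zero_of_eval_zero_at_prod_finset (p - q) (fun _ => {0, 1})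
    (fun i => ?_) fun x hx => ?_)
  · rw [card_pair zero_ne_one]
    exact Nat.lt_succ_of_le ((degreeOf_sub_le i p q).trans (max_le (hp i) (hq i)))
  · rw [map_sub, sub_eq_zero]
    exact h x fun i => by simpa using hx i

end MvPolynomial

open MvPolynomial Finset in
theorem boolean_sos_to_preordering (n d : ℕ) (p : MvPolynomial (Fin n) ℝ)
    (hmult : ∀ i, p.degreeOf i ≤ 1)
    (hsos : ∃ (m : ℕ) (q : Fin m → MvPolynomial (Fin n) ℝ),
      (∀ j, (q j).totalDegree ≤ d) ∧
      p - ∑ j, (q j) ^ 2 ∈ booleanIdeal n) :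
    InPreordering n d p := by
  obtain ⟨m, q, hdeg, hmem⟩ := hsos
  choose r hr_ml hr_deg hr_mem using fun j => exists_degreeOf_le_one_sub_mem_span (q j)
  refine ⟨fun S => ∑ j, (r j).divMonomial (sqfreeExp S) ^ 2, fun S => ⟨m, _, rfl⟩,
    fun S => ?_, ?_⟩
  · rw [sum_mul]
    exact totalDegree_finsetSum_le fun j _ => (totalDegree_sq_divMonomial_mul_cubeProd_le _ S).trans
      (Nat.mul_le_mul_left 2 ((hr_deg j).trans (hdeg j)))
  have hcert : ∑ S : Finset (Fin n), (∑ j, (r j).divMonomial (sqfreeExp S) ^ 2) *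
      ∏ i ∈ S, (X i - X i ^ 2) = ∑ j, sosCert univ (r j) := by
    simp_rw [sum_mul, sosCert, powerset_univ, cubeProd]
    exact sum_comm
  rw [hcert]
  refine eq_of_eval_eq_of_degreeOf_le_one hmult (isMultilinearIn_univ.mp
    (IsMultilinearIn.sum fun j _ => (isMultilinearIn_univ.mpr (hr_ml j)).sosCert)) fun x hx => ?_
  have hp := eval_eq_zero_of_mem_span_sq_sub hx hmem
  rw [map_sub, sub_eq_zero] at hp
  rw [hp, map_sum, map_sum]
  refine sum_congr rfl fun j _ => ?_
  have hqr : eval x (q j) = eval x (r j) :=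
    sub_eq_zero.mp (by simpa using eval_eq_zero_of_mem_span_sq_sub hx (hr_mem j))
  rw [eval_sosCert hx, map_pow, hqr]
end

section
/- Let ∂_S denote, for S ⊆ [n], the linear map on the space of multilinear polynomials in ℝ[x_1,…,x_n] determined on squarefree monomials by ∂_S(x_A) = x_{A\S} if S ⊆ A and ∂_S(x_A) = 0 otherwise. Then for every multilinear polynomial q ∈ ℝ[x_1,…,x_n], the polynomial Σ_{S⊆[n]} g_S·(∂_S q)² is multilinear and satisfies q² - Σ_{S⊆[n]} g_S·(∂_S q)² ∈ I_n; that is, Σ_{S⊆[n]} g_S·(∂_S q)² equals the multilinear reduction of q² modulo I_n. Moreover, if deg q ≤ d, then deg(g_S·(∂_S q)²) ≤ 2d for every S ⊆ [n]. -/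
/-!
Write `c_A` for the coefficient of `x_A` in `q`, so that `∂_S q = ∑_{A ⊇ S} c_A x_{A \ S}` and
`∑_S g_S (∂_S q)² = ∑_{A,B} c_A c_B ∑_{S ⊆ A ∩ B} g_S x_{A \ S} x_{B \ S}`.
The inner sum equals `x_{A \ B} x_{B \ A} ∏_{i ∈ A ∩ B} ((x_i - x_i²) + x_i²) = x_{A ∪ B}`,
so the sum is the multilinear polynomial `∑_{A,B} c_A c_B x_{A ∪ B}`. Since the `x_i` are
idempotent modulo `I_n`, `x_A x_B ≡ x_{A ∪ B}`, which is exactly the reduction of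
`q² = ∑_{A,B} c_A c_B x_A x_B`. For the degree bound, `deg g_S ≤ 2|S|`, `deg ∂_S q ≤ d - |S|`,
and `∂_S q = 0` when `|S| > d`.
-/

open MvPolynomial

/-- The exponent vector of the squarefree monomial `x_A`. -/
noncomputable def expOf {n : ℕ} (A : Finset (Fin n)) : Fin n →₀ ℕ :=
  ∑ i ∈ A, Finsupp.single i 1

/-- The squarefree monomial `x_A = ∏_{i ∈ A} x_i`. -/
noncomputable def sqfreeMon {n : ℕ} (A : Finset (Fin n)) : MvPolynomial (Fin n) ℝ :=
  ∏ i ∈ A, X i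

/-- The linear map `∂_S` on multilinear polynomials, determined on squarefree
monomials by `∂_S(x_A) = x_{A \ S}` if `S ⊆ A` and `∂_S(x_A) = 0` otherwise. -/
noncomputable def derS {n : ℕ} (S : Finset (Fin n)) (q : MvPolynomial (Fin n) ℝ) :
    MvPolynomial (Fin n) ℝ :=
  ∑ A ∈ Finset.univ.filter (fun A : Finset (Fin n) => S ⊆ A),
    C (q.coeff (expOf A)) * sqfreeMon (A \ S)

open Finset

section CommMonoid
variable {M ι : Type*} [CommMonoid M] [DecidableEq ι] (f : ι → M)

theorem prod_mul_prod_of_isIdempotentElem (hf : ∀ i, IsIdempotentElem (f i)) (A B : Finset ι) :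
    (∏ i ∈ A, f i) * ∏ i ∈ B, f i = ∏ i ∈ A ∪ B, f i := by
  have hAB : (∏ i ∈ A ∩ B, f i) * ∏ i ∈ A ∩ B, f i = ∏ i ∈ A ∩ B, f i := by
    rw [← prod_mul_distrib]; exact prod_congr rfl fun i _ => (hf i).eq
  rw [← prod_union_inter, ← prod_sdiff (inter_subset_union (s := A) (t := B)), mul_assoc, hAB]

theorem prod_sdiff_mul_prod_sdiff {S A B : Finset ι} (hS : S ⊆ A ∩ B) :
    (∏ i ∈ A \ S, f i) * ∏ i ∈ B \ S, f i =
      (∏ i ∈ (A ∪ B) \ (A ∩ B), f i) * ∏ i ∈ (A ∩ B) \ S, f i ^ 2 := by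
  have hunion : (A ∪ B) \ S = ((A ∪ B) \ (A ∩ B)) ∪ ((A ∩ B) \ S) := by
    ext i; have := @hS i; simp only [mem_sdiff, mem_union, mem_inter] at *; tauto
  have hdisj : Disjoint ((A ∪ B) \ (A ∩ B)) ((A ∩ B) \ S) :=
    sdiff_disjoint.mono_right sdiff_subset
  have hinter : A \ S ∩ (B \ S) = (A ∩ B) \ S := by
    ext i; simp only [mem_sdiff, mem_inter]; tauto
  rw [← prod_union_inter, ← union_sdiff_distrib, hinter, hunion,
    prod_union hdisj, mul_assoc, ← prod_mul_distrib]
  simp only [sq]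

end CommMonoid

theorem sum_powerset_inter_prod_sub_sq_mul {R ι : Type*} [CommRing R] [DecidableEq ι]
    (f : ι → R) (A B : Finset ι) :
    ∑ S ∈ (A ∩ B).powerset,
        (∏ i ∈ S, (f i - f i ^ 2)) * ((∏ i ∈ A \ S, f i) * ∏ i ∈ B \ S, f i) =
      ∏ i ∈ A ∪ B, f i := by
  calc _ = ∑ S ∈ (A ∩ B).powerset, (∏ i ∈ (A ∪ B) \ (A ∩ B), f i) *
          ((∏ i ∈ S, (f i - f i ^ 2)) * ∏ i ∈ (A ∩ B) \ S, f i ^ 2) :=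
        sum_congr rfl fun S hS => by
          rw [prod_sdiff_mul_prod_sdiff f (mem_powerset.mp hS)]; ring
    _ = (∏ i ∈ (A ∪ B) \ (A ∩ B), f i) * ∏ i ∈ A ∩ B, ((f i - f i ^ 2) + f i ^ 2) := by
        rw [← mul_sum, prod_add]
    _ = ∏ i ∈ A ∪ B, f i := by
        simp only [sub_add_cancel]; exact prod_sdiff inter_subset_union

section BooleanCube
variable {n : ℕ}

theorem expOf_apply (A : Finset (Fin n)) (i : Fin n) :
    expOf A i = if i ∈ A then 1 else 0 := by
  simp [expOf, Finsupp.finsetSum_apply, Finsupp.single_apply]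

theorem support_expOf (A : Finset (Fin n)) : (expOf A).support = A := by
  ext i; simp [expOf_apply]

theorem expOf_injective : Function.Injective (expOf (n := n)) := fun A B h => by
  rw [← support_expOf A, h, support_expOf]

theorem degree_expOf (A : Finset (Fin n)) : (expOf A).degree = A.card := by
  simp [expOf, map_sum, Finsupp.degree_single]

theorem sqfreeMon_eq_monomial (A : Finset (Fin n)) : sqfreeMon A = monomial (expOf A) 1 := by
  rw [expOf, monomial_sum_one]; rfl

theorem degreeOf_sqfreeMon_le_one (A : Finset (Fin n)) (i : Fin n) :
    (sqfreeMon A).degreeOf i ≤ 1 := by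
  rw [sqfreeMon_eq_monomial, degreeOf_monomial_eq _ _ one_ne_zero, expOf_apply]
  split <;> omega

theorem totalDegree_sqfreeMon (A : Finset (Fin n)) : (sqfreeMon A).totalDegree = A.card := by
  rw [sqfreeMon_eq_monomial, totalDegree_monomial _ one_ne_zero]; exact degree_expOf A

theorem mem_range_expOf_of_mem_support {q : MvPolynomial (Fin n) ℝ} (hq : ∀ i, q.degreeOf i ≤ 1)
    {m : Fin n →₀ ℕ} (hm : m ∈ q.support) : m ∈ Set.range expOf := by
  refine ⟨m.support, Finsupp.ext fun i => ?_⟩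
  have := (monomial_le_degreeOf i hm).trans (hq i)
  simp only [expOf_apply, Finsupp.mem_support_iff]
  split_ifs <;> omega

theorem eq_sum_C_mul_sqfreeMon {q : MvPolynomial (Fin n) ℝ} (hq : ∀ i, q.degreeOf i ≤ 1) :
    q = ∑ A, C (q.coeff (expOf A)) * sqfreeMon A := by
  simp_rw [sqfreeMon_eq_monomial, C_mul_monomial, mul_one]
  rw [← sum_image (f := fun m => monomial m (q.coeff m)) fun A _ B _ h => expOf_injective h,
    ← sum_subset, ← as_sum]
  · intro m hm
    obtain ⟨A, rfl⟩ := mem_range_expOf_of_mem_support hq hm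
    exact mem_image_of_mem _ (mem_univ A)
  · intro m _ hm
    rw [notMem_support_iff.mp hm, monomial_zero]

theorem sum_prod_mul_derS_sq (q : MvPolynomial (Fin n) ℝ) :
    ∑ S, (∏ i ∈ S, (X i - X i ^ 2)) * derS S q ^ 2 =
      ∑ A, ∑ B, C (q.coeff (expOf A) * q.coeff (expOf B)) * sqfreeMon (A ∪ B) := by
  have hterm : ∀ S : Finset (Fin n), (∏ i ∈ S, (X i - X i ^ 2)) * derS S q ^ 2 =
      ∑ A, ∑ B, if S ∈ (A ∩ B).powerset then
        C (q.coeff (expOf A) * q.coeff (expOf B)) *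
          ((∏ i ∈ S, (X i - X i ^ 2)) * (sqfreeMon (A \ S) * sqfreeMon (B \ S)))
      else 0 := by
    intro S
    rw [derS, sum_filter, sq, sum_mul_sum, mul_sum]
    refine sum_congr rfl fun A _ => ?_
    rw [mul_sum]
    refine sum_congr rfl fun B _ => ?_
    by_cases hA : S ⊆ A <;> by_cases hB : S ⊆ B <;>
      simp only [hA, hB, mem_powerset, subset_inter_iff, if_true, if_false, and_true, and_false,
        mul_zero, zero_mul, C_mul]
    ring
  simp_rw [hterm]
  rw [sum_comm]
  refine sum_congr rfl fun A _ => ?_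
  rw [sum_comm]
  refine sum_congr rfl fun B _ => ?_
  rw [Fintype.sum_ite_mem, ← mul_sum]
  exact congrArg _ (sum_powerset_inter_prod_sub_sq_mul X A B)

theorem sqfreeMon_mul_sub_mem_booleanIdeal (A B : Finset (Fin n)) :
    sqfreeMon A * sqfreeMon B - sqfreeMon (A ∪ B) ∈ booleanIdeal n := by
  have hidem : ∀ i, IsIdempotentElem (Ideal.Quotient.mk (booleanIdeal n) (X i)) := fun i => by
    rw [IsIdempotentElem, ← map_mul, Ideal.Quotient.eq, ← sq]
    exact Ideal.subset_span ⟨i, rfl⟩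
  rw [← Ideal.Quotient.eq, map_mul]
  simp only [sqfreeMon, map_prod]
  exact prod_mul_prod_of_isIdempotentElem _ hidem A B

theorem sq_sum_C_mul_sqfreeMon_sub_mem_booleanIdeal (c : Finset (Fin n) → ℝ) :
    (∑ A, C (c A) * sqfreeMon A) ^ 2 - ∑ A, ∑ B, C (c A * c B) * sqfreeMon (A ∪ B) ∈
      booleanIdeal n := by
  rw [sq, sum_mul_sum, ← sum_sub_distrib]
  refine Ideal.sum_mem _ fun A _ => ?_
  rw [← sum_sub_distrib]
  refine Ideal.sum_mem _ fun B _ => ?_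
  rw [show C (c A) * sqfreeMon A * (C (c B) * sqfreeMon B) - C (c A * c B) * sqfreeMon (A ∪ B) =
      C (c A * c B) * (sqfreeMon A * sqfreeMon B - sqfreeMon (A ∪ B)) by rw [C_mul]; ring]
  exact Ideal.mul_mem_left _ _ (sqfreeMon_mul_sub_mem_booleanIdeal A B)

theorem degreeOf_sum_sum_C_mul_sqfreeMon_le_one (c : Finset (Fin n) → Finset (Fin n) → ℝ)
    (i : Fin n) : (∑ A, ∑ B, C (c A B) * sqfreeMon (A ∪ B)).degreeOf i ≤ 1 :=
  (degreeOf_sum_le _ _ _).trans <| Finset.sup_le fun _ _ => (degreeOf_sum_le _ _ _).trans <|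
    Finset.sup_le fun _ _ => (degreeOf_C_mul_le _ _ _).trans (degreeOf_sqfreeMon_le_one _ _)

theorem totalDegree_prod_X_sub_X_sq_le (S : Finset (Fin n)) :
    (∏ i ∈ S, (X i - X i ^ 2 : MvPolynomial (Fin n) ℝ)).totalDegree ≤ 2 * S.card := by
  have hfactor : ∀ i, (X i - X i ^ 2 : MvPolynomial (Fin n) ℝ).totalDegree ≤ 2 := fun i =>
    (totalDegree_sub _ _).trans <| max_le (by rw [totalDegree_X]; omega)
      ((totalDegree_pow _ _).trans (by rw [totalDegree_X]))
  calc _ ≤ ∑ i ∈ S, 2 := (totalDegree_finsetProd _ _).trans (sum_le_sum fun i _ => hfactor i)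
    _ = 2 * S.card := by rw [sum_const, smul_eq_mul, mul_comm]

section TotalDegree
variable {d : ℕ} {q : MvPolynomial (Fin n) ℝ}

theorem card_le_of_coeff_expOf_ne_zero (hd : q.totalDegree ≤ d) {A : Finset (Fin n)}
    (h : q.coeff (expOf A) ≠ 0) : A.card ≤ d :=
  degree_expOf A ▸ (le_totalDegree (mem_support_iff.mpr h)).trans hd

theorem derS_eq_zero_of_lt_card (hd : q.totalDegree ≤ d) {S : Finset (Fin n)} (hS : d < S.card) :
    derS S q = 0 := by
  refine sum_eq_zero fun A hA => ?_
  have hcoeff : q.coeff (expOf A) = 0 := by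
    by_contra h
    have := card_le_card (mem_filter.mp hA).2
    have := card_le_of_coeff_expOf_ne_zero hd h
    omega
  rw [hcoeff, C_0, zero_mul]

theorem totalDegree_derS_le (hd : q.totalDegree ≤ d) (S : Finset (Fin n)) :
    (derS S q).totalDegree ≤ d - S.card := by
  refine totalDegree_finsetSum_le fun A hA => ?_
  by_cases h : q.coeff (expOf A) = 0
  · simp [h]
  have := card_le_of_coeff_expOf_ne_zero hd h
  refine (totalDegree_mul _ _).trans ?_
  rw [totalDegree_C, zero_add, totalDegree_sqfreeMon, card_sdiff_of_subset (mem_filter.mp hA).2]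
  omega

theorem totalDegree_prod_mul_derS_sq_le (hd : q.totalDegree ≤ d) (S : Finset (Fin n)) :
    ((∏ i ∈ S, (X i - X i ^ 2)) * derS S q ^ 2).totalDegree ≤ 2 * d := by
  rcases le_or_gt S.card d with hS | hS
  · calc _ ≤ 2 * S.card + 2 * (d - S.card) :=
          (totalDegree_mul _ _).trans <| add_le_add (totalDegree_prod_X_sub_X_sq_le S) <|
            (totalDegree_pow _ _).trans (Nat.mul_le_mul_left 2 (totalDegree_derS_le hd S))
      _ = 2 * d := by omega
  · simp [derS_eq_zero_of_lt_card hd hS]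

end TotalDegree

end BooleanCube

theorem boolean_square_lift (n d : ℕ) (q : MvPolynomial (Fin n) ℝ)
    (hq : ∀ i, q.degreeOf i ≤ 1) :
    (∀ i, (∑ S : Finset (Fin n),
        (∏ i ∈ S, (X i - (X i) ^ 2)) * (derS S q) ^ 2).degreeOf i ≤ 1) ∧
    q ^ 2 - (∑ S : Finset (Fin n),
        (∏ i ∈ S, (X i - (X i) ^ 2)) * (derS S q) ^ 2) ∈ booleanIdeal n ∧
    (q.totalDegree ≤ d → ∀ S : Finset (Fin n),
      ((∏ i ∈ S, (X i - (X i) ^ 2)) * (derS S q) ^ 2).totalDegree ≤ 2 * d) := by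
  rw [sum_prod_mul_derS_sq]
  refine ⟨degreeOf_sum_sum_C_mul_sqfreeMon_le_one _, ?_, totalDegree_prod_mul_derS_sq_le⟩
  have := sq_sum_C_mul_sqfreeMon_sub_mem_booleanIdeal fun A => q.coeff (expOf A)
  rwa [← eq_sum_C_mul_sqfreeMon hq] at this
end

section
/- Let G be a subgroup of S_n acting on ℝ[x_1,…,x_n] by permuting variables, let C be a subgroup of G, and let sgn denote the sign character of permutations. For a polynomial h define S_G(h) = Σ_{π∈G} π·h. Then for all polynomials f, g ∈ ℝ[x_1,…,x_n], setting u = Σ_{c∈C} sgn(c)·(c·f) and v = Σ_{d∈C} sgn(d)·(d·g), one has S_G(u·v) = |C| · S_G( f · Σ_{e∈C} sgn(e)·(e·g) ). -/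
open MvPolynomial
open scoped Classical

theorem column_stabilizer_simplification (n : ℕ)
    (G : Subgroup (Equiv.Perm (Fin n))) (Γ : Subgroup (Equiv.Perm (Fin n)))
    (hΓG : Γ ≤ G) (f g : MvPolynomial (Fin n) ℝ) :
    (∑ π : G, rename (π : Equiv.Perm (Fin n))
        ((∑ c : Γ, ((Equiv.Perm.sign (c : Equiv.Perm (Fin n)) : ℤ) : ℝ) •
            rename (c : Equiv.Perm (Fin n)) f) *
         (∑ e : Γ, ((Equiv.Perm.sign (e : Equiv.Perm (Fin n)) : ℤ) : ℝ) •
            rename (e : Equiv.Perm (Fin n)) g))) =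
      (Nat.card Γ : ℝ) •
        ∑ π : G, rename (π : Equiv.Perm (Fin n))
          (f * ∑ e : Γ, ((Equiv.Perm.sign (e : Equiv.Perm (Fin n)) : ℤ) : ℝ) •
            rename (e : Equiv.Perm (Fin n)) g) := by
  classical
  set s : Equiv.Perm (Fin n) → ℝ := fun c => ((Equiv.Perm.sign c : ℤ) : ℝ) with hs
  set v : MvPolynomial (Fin n) ℝ :=
    ∑ e : Γ, s (e : Equiv.Perm (Fin n)) • rename (e : Equiv.Perm (Fin n)) g with hv
  have hsq : ∀ c, s c * s c = 1 := by
    intro c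
    simp [hs, ← Int.cast_mul, Int.units_mul_self]
  have hmul : ∀ c e, s (c * e) = s c * s e := by
    intro c e; simp [hs, ← Int.cast_mul, map_mul]
  have hne : ∀ c, s c ≠ 0 := by
    intro c h
    have := hsq c
    rw [h, mul_zero] at this
    exact zero_ne_one this
  have hinv : ∀ c, s c⁻¹ = s c := by
    intro c
    have h1 : s c * s c⁻¹ = 1 := by rw [← hmul, mul_inv_cancel]; simp [hs]
    exact mul_left_cancel₀ (hne c) (h1.trans (hsq c).symm)
  have hren : ∀ (a b : Equiv.Perm (Fin n)) (p : MvPolynomial (Fin n) ℝ),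
      rename a (rename b p) = rename (a * b) p := by
    intro a b p
    rw [rename_rename]
    rfl
  -- rename c v = s c • v for c ∈ Γ
  have hA : ∀ c : Γ, rename (c : Equiv.Perm (Fin n)) v = s (c : Equiv.Perm (Fin n)) • v := by
    intro c
    rw [hv, map_sum, Finset.smul_sum, ← Equiv.sum_comp (Equiv.mulLeft c⁻¹)]
    refine Finset.sum_congr rfl fun e _ => ?_
    simp only [Equiv.coe_mulLeft, map_smul, hren, smul_smul]
    have h1 : (c : Equiv.Perm (Fin n)) * ((c⁻¹ * e : Γ) : Equiv.Perm (Fin n))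
        = (e : Equiv.Perm (Fin n)) := by push_cast; group
    have h2 : s ((c⁻¹ * e : Γ) : Equiv.Perm (Fin n))
        = s (c : Equiv.Perm (Fin n)) * s (e : Equiv.Perm (Fin n)) := by
      push_cast
      rw [hmul, hinv]
    rw [h1, h2]
  -- key: s c • (rename c f * v) = rename c (f * v)
  have hB : ∀ c : Γ, s (c : Equiv.Perm (Fin n)) •
      (rename (c : Equiv.Perm (Fin n)) f * v) = rename (c : Equiv.Perm (Fin n)) (f * v) := by
    intro c
    rw [map_mul, hA, mul_smul_comm]
  -- expand u * v
  have hexp : (∑ c : Γ, s (c : Equiv.Perm (Fin n)) • rename (c : Equiv.Perm (Fin n)) f) * v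
      = ∑ c : Γ, rename (c : Equiv.Perm (Fin n)) (f * v) := by
    rw [Finset.sum_mul]
    refine Finset.sum_congr rfl fun c _ => ?_
    rw [smul_mul_assoc, hB]
  -- absorption: summing over G of rename h (for h ∈ Γ) does nothing
  have habs : ∀ (h : Γ) (p : MvPolynomial (Fin n) ℝ),
      (∑ π : G, rename (π : Equiv.Perm (Fin n)) (rename (h : Equiv.Perm (Fin n)) p))
      = ∑ π : G, rename (π : Equiv.Perm (Fin n)) p := by
    intro h p
    set x : G := ⟨(h : Equiv.Perm (Fin n)), hΓG h.2⟩ with hx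
    have key : ∀ π : G, rename (π : Equiv.Perm (Fin n)) (rename (h : Equiv.Perm (Fin n)) p)
        = rename (((π * x : G) : Equiv.Perm (Fin n))) p := by
      intro π
      rw [hren]
      rfl
    simp only [key]
    simpa using Equiv.sum_comp (Equiv.mulRight x)
      (fun π : G => rename (π : Equiv.Perm (Fin n)) p)
  calc (∑ π : G, rename (π : Equiv.Perm (Fin n))
        ((∑ c : Γ, s (c : Equiv.Perm (Fin n)) • rename (c : Equiv.Perm (Fin n)) f) * v))
      = ∑ π : G, ∑ c : Γ, rename (π : Equiv.Perm (Fin n))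
          (rename (c : Equiv.Perm (Fin n)) (f * v)) := by
        refine Finset.sum_congr rfl fun π _ => ?_
        rw [hexp, map_sum]
    _ = ∑ c : Γ, ∑ π : G, rename (π : Equiv.Perm (Fin n))
          (rename (c : Equiv.Perm (Fin n)) (f * v)) := Finset.sum_comm
    _ = ∑ c : Γ, ∑ π : G, rename (π : Equiv.Perm (Fin n)) (f * v) :=
        Finset.sum_congr rfl fun c _ => habs c (f * v)
    _ = (Nat.card Γ : ℝ) • ∑ π : G, rename (π : Equiv.Perm (Fin n)) (f * v) := by
        rw [Finset.sum_const, Nat.card_eq_fintype_card, Nat.cast_smul_eq_nsmul]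
        simp
end

section
/- Let σ̃_1, …, σ̃_n ∈ ℝ[x_1,…,x_n] be polynomials such that each σ̃_i is invariant under Stab_{S_n}(i). For j ∈ [n] define ρ_j = (1/n)·Σ_{i=1}^n (i j)·σ̃_i, where (i j) denotes the transposition of i and j (the identity when i = j). Then each ρ_j is invariant under Stab_{S_n}(j), and (j n)·ρ_n = ρ_j for every j ∈ [n]. -/
open MvPolynomial

/-- For `σ̃_1, …, σ̃_n`, define `ρ_j = (1/n)·Σ_{i=1}^n (i j)·σ̃_i`.  The variables are
indexed by `Fin (n+1)` (so there are `n+1` of them) and the distinguished index `n`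
is `Fin.last n`. -/
noncomputable def rhoAvg (n : ℕ) (σ : Fin (n + 1) → MvPolynomial (Fin (n + 1)) ℝ)
    (j : Fin (n + 1)) : MvPolynomial (Fin (n + 1)) ℝ :=
  (((n : ℝ) + 1)⁻¹) • ∑ i, rename (Equiv.swap i j) (σ i)

theorem rho_translates (n : ℕ) (σ : Fin (n + 1) → MvPolynomial (Fin (n + 1)) ℝ)
    (hσ : ∀ (i : Fin (n + 1)) (π : Equiv.Perm (Fin (n + 1))), π i = i →
      rename π (σ i) = σ i) :
    (∀ (j : Fin (n + 1)) (π : Equiv.Perm (Fin (n + 1))), π j = j →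
      rename π (rhoAvg n σ j) = rhoAvg n σ j) ∧
    (∀ j : Fin (n + 1),
      rename (Equiv.swap j (Fin.last n)) (rhoAvg n σ (Fin.last n)) = rhoAvg n σ j) := by
  constructor
  · intro j π hπ
    unfold rhoAvg
    rw [map_smul, map_sum]
    congr 1
    refine Finset.sum_congr rfl fun i _ => ?_
    rw [rename_rename]
    have hν : rename ((((Equiv.swap i j).trans π).trans (Equiv.swap i j) : Equiv.Perm _) :
        Fin (n+1) → Fin (n+1)) (σ i) = σ i :=
      hσ i _ (by simp [hπ])
    calc rename (⇑π ∘ ⇑(Equiv.swap i j)) (σ i)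
        = rename (⇑(Equiv.swap i j) ∘
            ⇑(((Equiv.swap i j).trans π).trans (Equiv.swap i j) : Equiv.Perm _)) (σ i) := by
          exact congrFun (congrArg (fun f => ⇑(rename f)) (_root_.funext fun x => by simp)) (σ i)
      _ = rename (Equiv.swap i j)
            (rename (((Equiv.swap i j).trans π).trans (Equiv.swap i j) : Equiv.Perm _)
              (σ i)) := (rename_rename _ _ _).symm
      _ = rename (Equiv.swap i j) (σ i) := by rw [hν]
  · intro j
    unfold rhoAvg
    rw [map_smul, map_sum]
    congr 1
    refine Finset.sum_congr rfl fun i _ => ?_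
    rw [rename_rename]
    have hδ : rename ((((Equiv.swap i (Fin.last n)).trans (Equiv.swap j (Fin.last n))).trans
        (Equiv.swap i j) : Equiv.Perm _) : Fin (n+1) → Fin (n+1)) (σ i) = σ i :=
      hσ i _ (by simp)
    calc rename (⇑(Equiv.swap j (Fin.last n)) ∘ ⇑(Equiv.swap i (Fin.last n))) (σ i)
        = rename (⇑(Equiv.swap i j) ∘
            ⇑(((Equiv.swap i (Fin.last n)).trans (Equiv.swap j (Fin.last n))).trans
              (Equiv.swap i j) : Equiv.Perm _)) (σ i) := by
          exact congrFun (congrArg (fun f => ⇑(rename f)) (_root_.funext fun x => by simp)) (σ i)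
      _ = rename (Equiv.swap i j)
            (rename (((Equiv.swap i (Fin.last n)).trans (Equiv.swap j (Fin.last n))).trans
              (Equiv.swap i j) : Equiv.Perm _) (σ i)) := (rename_rename _ _ _).symm
      _ = rename (Equiv.swap i j) (σ i) := by rw [hδ]
end
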